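/- arXiv:1910.00921 — 2 statements merged into one kernel-verified Lean document; each statement's English description precedes it below -/
import Mathlib

section
/- Let ι be a finite index set of mesh cells, m : ι → ℝ with m K > 0 for each K, T : ι → ι → ℝ symmetric with T K L ≥ 0 and T K K = 0, b : ι → ℝ with b K ≥ 0, a : ι → ℝ, Δt > 0 and p > 0. If (y0, y1) is a scheme step, then: (i) if a K = 0 for all K, the discrete mass is conserved: Σ_K m K·|y1 K|² = Σ_K m K·|y0 K|²; (ii) if a K ≥ 0 for all K, the discrete mass is nonincreasing: Σ_K m K·|y1 K|² ≤ Σ_K m K·|y0 K|². -/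
/-!
Multiplying the equation of cell `K` by the conjugate of the midpoint value `(y1 K + y0 K) / 2`
and taking imaginary parts, the time difference yields `m K (|y1 K|² - |y0 K|²) / (2 Δt)`, the
boundary and nonlinear terms (real multiples of the midpoint) vanish, and the damping term yields
`m K · a K · |(y1 K + y0 K) / 2|²`. Summed over the cells, the interior fluxes cancel pairwise since
`T` is symmetric, which leaves the balance
`Σ m |y1|² = Σ m |y0|² - 2 Δt Σ m a |(y1 + y0) / 2|²`.
-/

open Complex ComplexConjugate

theorem Finset.sum_sum_eq_zero_of_antisymm {ι M : Type*} [AddCommGroup M] [IsAddTorsionFree M]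
    (s : Finset ι) (f : ι → ι → M) (hf : ∀ i j, f i j = -f j i) :
    ∑ i ∈ s, ∑ j ∈ s, f i j = 0 := by
  refine neg_eq_self.mp ?_
  simp only [← Finset.sum_neg_distrib, ← hf]
  exact Finset.sum_comm

theorem Complex.im_conj_mul_ofReal_mul_sub_self (t : ℝ) (u v : ℂ) :
    (conj u * (t * (v - u))).im = t * (conj u * v).im := by
  rw [mul_left_comm, mul_sub, Complex.conj_mul', ← Complex.ofReal_pow, Complex.im_ofReal_mul,
    Complex.sub_im, Complex.ofReal_im, sub_zero]

theorem Complex.im_conj_mul_eq_neg (u v : ℂ) : (conj u * v).im = -(conj v * u).im := by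
  rw [← Complex.conj_im, map_mul, Complex.conj_conj, mul_comm]

theorem im_sum_conj_mul_sum_sub_eq_zero {ι : Type*} [Fintype ι] (T : ι → ι → ℝ)
    (hT : ∀ K L, T K L = T L K) (u : ι → ℂ) :
    ∑ K, (conj (u K) * ∑ L, (T K L : ℂ) * (u L - u K)).im = 0 := by
  simp only [Finset.mul_sum, Complex.im_sum, Complex.im_conj_mul_ofReal_mul_sub_self]
  refine Finset.sum_sum_eq_zero_of_antisymm _ _ fun K L => ?_
  rw [hT, Complex.im_conj_mul_eq_neg, mul_neg]

theorem im_conj_midpoint_mul_eq {μ Δt α β γ₁ γ₂ : ℝ} {z0 z1 S : ℂ} (hΔt : Δt ≠ 0) :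
    (conj ((z1 + z0) / 2) * (I * μ * (z1 - z0) / Δt + S - β * (z1 + z0) / 2
      - γ₁ * γ₂ * (z1 + z0) + I * μ * α * (z1 + z0) / 2)).im
      = μ * (‖z1‖ ^ 2 - ‖z0‖ ^ 2) / (2 * Δt) + (conj ((z1 + z0) / 2) * S).im
        + μ * α * ‖(z1 + z0) / 2‖ ^ 2 := by
  simp only [Complex.sq_norm, Complex.normSq_apply, Complex.mul_im, Complex.mul_re,
    Complex.div_re, Complex.div_im, Complex.conj_re, Complex.conj_im, Complex.add_re,
    Complex.add_im, Complex.sub_re, Complex.sub_im, Complex.I_re, Complex.I_im, Complex.ofReal_re,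
    Complex.ofReal_im, Complex.re_ofNat, Complex.im_ofNat]
  field_simp
  ring

def IsSchemeStep {ι : Type*} [Fintype ι] (m : ι → ℝ) (T : ι → ι → ℝ) (b a : ι → ℝ) (Δt p : ℝ)
    (y0 y1 : ι → ℂ) : Prop :=
  ∀ K : ι,
    I * (m K : ℂ) * (y1 K - y0 K) / (Δt : ℂ)
      + ∑ L : ι, (T K L : ℂ) * ((y1 L + y0 L) / 2 - (y1 K + y0 K) / 2)
      - (b K : ℂ) * (y1 K + y0 K) / 2
      - ((m K / (2 * p) : ℝ) : ℂ)
          * (((‖y1 K‖ ^ (2 * p) - ‖y0 K‖ ^ (2 * p)) / (‖y1 K‖ ^ 2 - ‖y0 K‖ ^ 2) : ℝ) : ℂ)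
          * (y1 K + y0 K)
      + I * (m K : ℂ) * (a K : ℂ) * (y1 K + y0 K) / 2 = 0

theorem IsSchemeStep.mass_balance {ι : Type*} [Fintype ι] {m : ι → ℝ} {T : ι → ι → ℝ}
    {b a : ι → ℝ} {Δt p : ℝ} {y0 y1 : ι → ℂ} (h : IsSchemeStep m T b a Δt p y0 y1)
    (hT : ∀ K L, T K L = T L K) (hΔt : Δt ≠ 0) :
    ∑ K, m K * ‖y1 K‖ ^ 2
      = ∑ K, m K * ‖y0 K‖ ^ 2 - 2 * Δt * ∑ K, m K * a K * ‖(y1 K + y0 K) / 2‖ ^ 2 := by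
  have hcell : ∀ K, m K * (‖y1 K‖ ^ 2 - ‖y0 K‖ ^ 2) / (2 * Δt)
      + (conj ((y1 K + y0 K) / 2) * ∑ L, (T K L : ℂ) * ((y1 L + y0 L) / 2 - (y1 K + y0 K) / 2)).im
      + m K * a K * ‖(y1 K + y0 K) / 2‖ ^ 2 = 0 := fun K => by
    rw [← im_conj_midpoint_mul_eq hΔt, h K, mul_zero, Complex.zero_im]
  have hflux := im_sum_conj_mul_sum_sub_eq_zero T hT fun K => (y1 K + y0 K) / 2
  have hsum := Finset.sum_eq_zero (s := Finset.univ) fun K _ => hcell K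
  rw [Finset.sum_add_distrib, Finset.sum_add_distrib, hflux, add_zero, ← Finset.sum_div,
    add_eq_zero_iff_eq_neg, div_eq_iff (by positivity)] at hsum
  simp only [mul_sub, Finset.sum_sub_distrib] at hsum
  linarith

theorem discrete_mass_conservation_and_dissipation_general {ι : Type*} [Fintype ι]
    (m : ι → ℝ) (hm : ∀ K, 0 < m K)
    (T : ι → ι → ℝ) (hTsymm : ∀ K L, T K L = T L K)
    (b : ι → ℝ)
    (a : ι → ℝ)
    (Δt : ℝ) (hΔt : 0 < Δt) (p : ℝ)
    (y0 y1 : ι → ℂ)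
    (hscheme : ∀ K : ι,
      Complex.I * (m K : ℂ) * (y1 K - y0 K) / (Δt : ℂ)
        + ∑ L : ι, (T K L : ℂ) * ((y1 L + y0 L) / 2 - (y1 K + y0 K) / 2)
        - (b K : ℂ) * (y1 K + y0 K) / 2
        - ((m K / (2 * p) : ℝ) : ℂ)
            * (((‖y1 K‖ ^ (2 * p) - ‖y0 K‖ ^ (2 * p)) /
                (‖y1 K‖ ^ 2 - ‖y0 K‖ ^ 2) : ℝ) : ℂ)
            * (y1 K + y0 K)
        + Complex.I * (m K : ℂ) * (a K : ℂ) * (y1 K + y0 K) / 2 = 0) :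
    ((∀ K, a K = 0) →
        ∑ K : ι, m K * ‖y1 K‖ ^ 2 = ∑ K : ι, m K * ‖y0 K‖ ^ 2) ∧
    ((∀ K, 0 ≤ a K) →
        ∑ K : ι, m K * ‖y1 K‖ ^ 2 ≤ ∑ K : ι, m K * ‖y0 K‖ ^ 2) := by
  have hbalance := IsSchemeStep.mass_balance hscheme hTsymm hΔt.ne'
  refine ⟨fun ha => by simpa [ha] using hbalance, fun ha => hbalance ▸ sub_le_self _ ?_⟩
  have hdamping : 0 ≤ ∑ K, m K * a K * ‖(y1 K + y0 K) / 2‖ ^ 2 :=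
    Finset.sum_nonneg fun K _ => mul_nonneg (mul_nonneg (hm K).le (ha K)) (sq_nonneg _)
  exact mul_nonneg (by positivity) hdamping

/-- Mass conservation (no damping) and mass dissipation (nonnegative damping)
for one step of the finite-volume scheme for the damped defocusing NLS. -/
theorem discrete_mass_conservation_and_dissipation {ι : Type*} [Fintype ι]
    (m : ι → ℝ) (hm : ∀ K, 0 < m K)
    (T : ι → ι → ℝ) (hTsymm : ∀ K L, T K L = T L K)
    (hTnonneg : ∀ K L, 0 ≤ T K L) (hTdiag : ∀ K, T K K = 0)
    (b : ι → ℝ) (hb : ∀ K, 0 ≤ b K)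
    (a : ι → ℝ)
    (Δt : ℝ) (hΔt : 0 < Δt) (p : ℝ) (hp : 0 < p)
    (y0 y1 : ι → ℂ)
    (hscheme : ∀ K : ι,
      Complex.I * (m K : ℂ) * (y1 K - y0 K) / (Δt : ℂ)
        + ∑ L : ι, (T K L : ℂ) * ((y1 L + y0 L) / 2 - (y1 K + y0 K) / 2)
        - (b K : ℂ) * (y1 K + y0 K) / 2
        - ((m K / (2 * p) : ℝ) : ℂ)
            * (((‖y1 K‖ ^ (2 * p) - ‖y0 K‖ ^ (2 * p)) /
                (‖y1 K‖ ^ 2 - ‖y0 K‖ ^ 2) : ℝ) : ℂ)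
            * (y1 K + y0 K)
        + Complex.I * (m K : ℂ) * (a K : ℂ) * (y1 K + y0 K) / 2 = 0) :
    ((∀ K, a K = 0) →
        ∑ K : ι, m K * ‖y1 K‖ ^ 2 = ∑ K : ι, m K * ‖y0 K‖ ^ 2) ∧
    ((∀ K, 0 ≤ a K) →
        ∑ K : ι, m K * ‖y1 K‖ ^ 2 ≤ ∑ K : ι, m K * ‖y0 K‖ ^ 2) :=
  discrete_mass_conservation_and_dissipation_general m hm T hTsymm b a Δt hΔt p y0 y1 hscheme
end

section
/- Let ι be a finite index set of mesh cells, m : ι → ℝ with m K > 0 for each K, T : ι → ι → ℝ symmetric with T K L ≥ 0 and T K K = 0, b : ι → ℝ with b K ≥ 0, Δt > 0 and p > 0. If (y0, y1) is a scheme step with zero damping (a K = 0 for all K), then the discrete H¹-level energy is conserved: E₁(y1) = E₁(y0), where E₁(y) = (1/4)·Σ_K Σ_L T K L·|y L − y K|² + (1/2)·Σ_K b K·|y K|² + Σ_K (m K/(2p))·|y K|^(2p). -/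
/-!
Pair the scheme at cell `K` with `y1 K - y0 K` in the real inner product of `ℂ`. The time
difference term, a purely imaginary multiple of `y1 K - y0 K`, drops out; the boundary and
nonlinear terms give the increments of their energies, the latter because the chord quotient
`c K` times `|y1 K|² - |y0 K|²` is exactly `|y1 K|^(2p) - |y0 K|^(2p)`. Summing over `K` and
symmetrising the flux term with `T K L = T L K` (discrete Green formula) turns it into minus the
increment of the face energy.
-/

open Finset Complex
open scoped InnerProductSpace

theorem real_inner_add_sub_eq_norm_sq_sub_norm_sq {F : Type*} [NormedAddCommGroup F]
    [InnerProductSpace ℝ F] (x y : F) : ⟪x + y, x - y⟫_ℝ = ‖x‖ ^ 2 - ‖y‖ ^ 2 := by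
  simp only [inner_add_left, inner_sub_right, real_inner_self_eq_norm_sq, real_inner_comm x y]
  ring

theorem sum_sum_mul_inner_sub_eq_neg_half {ι E : Type*} [Fintype ι] [NormedAddCommGroup E]
    [InnerProductSpace ℝ E] {T : ι → ι → ℝ} (hT : ∀ K L, T K L = T L K) (u v : ι → E) :
    ∑ K, ∑ L, T K L * ⟪v K, u L - u K⟫_ℝ
      = -(1 / 2) * ∑ K, ∑ L, T K L * ⟪v L - v K, u L - u K⟫_ℝ := by
  have swap : ∑ K, ∑ L, T K L * ⟪v K, u L - u K⟫_ℝ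
      = -∑ K, ∑ L, T K L * ⟪v L, u L - u K⟫_ℝ := by
    rw [sum_comm, ← sum_neg_distrib]
    refine sum_congr rfl fun K _ => ?_
    rw [← sum_neg_distrib]
    refine sum_congr rfl fun L _ => ?_
    rw [hT L K, ← neg_sub (u L), inner_neg_right, mul_neg]
  simp only [inner_sub_left, mul_sub, sum_sub_distrib]
  linarith

theorem Complex.real_inner_I_mul_ofReal_mul_self (c : ℝ) (z : ℂ) : ⟪z, I * c * z⟫_ℝ = 0 := by
  rw [Complex.inner, mul_assoc, mul_assoc, mul_conj, ← ofReal_mul]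
  simp

theorem Complex.real_inner_sub_eq_of_eq_sub_I_mul (β c : ℝ) {z w F : ℂ}
    (h : F = β * (z + w) - I * c * (z - w)) : ⟪z - w, F⟫_ℝ = β * (‖z‖ ^ 2 - ‖w‖ ^ 2) := by
  rw [h, inner_sub_right, real_inner_I_mul_ofReal_mul_self, ← real_smul, real_inner_smul_right,
    real_inner_comm, real_inner_add_sub_eq_norm_sq_sub_norm_sq, sub_zero]

/-- When `x ^ 2 = y ^ 2` the quotient is the junk value `0 / 0 = 0`, but then `x = y`. -/
theorem div_sq_sub_sq_mul_sq_sub_sq (f : ℝ → ℝ) {x y : ℝ} (hx : 0 ≤ x) (hy : 0 ≤ y) :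
    (f x - f y) / (x ^ 2 - y ^ 2) * (x ^ 2 - y ^ 2) = f x - f y := by
  rcases eq_or_ne (x ^ 2 - y ^ 2) 0 with h | h
  · rw [(sq_eq_sq₀ hx hy).1 (sub_eq_zero.1 h)]
    simp
  · exact div_mul_cancel₀ _ h

theorem real_inner_sub_eq_of_scheme_cell (m b Δt p : ℝ) {z w F : ℂ}
    (h : I * (m : ℂ) * (z - w) / (Δt : ℂ) + F - (b : ℂ) * (z + w) / 2
      - ((m / (2 * p) : ℝ) : ℂ)
        * (((‖z‖ ^ (2 * p) - ‖w‖ ^ (2 * p)) / (‖z‖ ^ 2 - ‖w‖ ^ 2) : ℝ) : ℂ) * (z + w) = 0) :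
    ⟪z - w, F⟫_ℝ
      = b / 2 * (‖z‖ ^ 2 - ‖w‖ ^ 2) + m / (2 * p) * (‖z‖ ^ (2 * p) - ‖w‖ ^ (2 * p)) := by
  have chord := div_sq_sub_sq_mul_sq_sub_sq (· ^ (2 * p)) (norm_nonneg z) (norm_nonneg w)
  rw [real_inner_sub_eq_of_eq_sub_I_mul
    (b / 2 + m / (2 * p) * ((‖z‖ ^ (2 * p) - ‖w‖ ^ (2 * p)) / (‖z‖ ^ 2 - ‖w‖ ^ 2))) (m / Δt)
    (by push_cast at h ⊢; linear_combination h)]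
  linear_combination m / (2 * p) * chord

theorem discrete_energy_conservation_general {ι : Type*} [Fintype ι]
    (m : ι → ℝ)
    (T : ι → ι → ℝ) (hTsymm : ∀ K L, T K L = T L K)
    (b : ι → ℝ)
    (Δt : ℝ) (p : ℝ)
    (y0 y1 : ι → ℂ)
    (hscheme : ∀ K : ι,
      Complex.I * (m K : ℂ) * (y1 K - y0 K) / (Δt : ℂ)
        + ∑ L : ι, (T K L : ℂ) * ((y1 L + y0 L) / 2 - (y1 K + y0 K) / 2)
        - (b K : ℂ) * (y1 K + y0 K) / 2
        - ((m K / (2 * p) : ℝ) : ℂ)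
            * (((‖y1 K‖ ^ (2 * p) - ‖y0 K‖ ^ (2 * p)) /
                (‖y1 K‖ ^ 2 - ‖y0 K‖ ^ 2) : ℝ) : ℂ)
            * (y1 K + y0 K) = 0) :
    (1 / 4) * ∑ K : ι, ∑ L : ι, T K L * ‖y1 L - y1 K‖ ^ 2
      + (1 / 2) * ∑ K : ι, b K * ‖y1 K‖ ^ 2
      + ∑ K : ι, (m K / (2 * p)) * ‖y1 K‖ ^ (2 * p)
    = (1 / 4) * ∑ K : ι, ∑ L : ι, T K L * ‖y0 L - y0 K‖ ^ 2
      + (1 / 2) * ∑ K : ι, b K * ‖y0 K‖ ^ 2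
      + ∑ K : ι, (m K / (2 * p)) * ‖y0 K‖ ^ (2 * p) := by
  have cell (K : ι) := real_inner_sub_eq_of_scheme_cell (m K) (b K) Δt p (hscheme K)
  simp only [inner_sum, ← real_smul, real_inner_smul_right] at cell
  have face (K L : ι) :
      ⟪(y1 L - y0 L) - (y1 K - y0 K), (y1 L + y0 L) / 2 - (y1 K + y0 K) / 2⟫_ℝ
        = (‖y1 L - y1 K‖ ^ 2 - ‖y0 L - y0 K‖ ^ 2) / 2 := by
    rw [show (y1 L + y0 L) / 2 - (y1 K + y0 K) / 2
          = (1 / 2 : ℝ) • ((y1 L - y1 K) + (y0 L - y0 K)) by rw [real_smul]; push_cast; ring,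
      show (y1 L - y0 L) - (y1 K - y0 K) = (y1 L - y1 K) - (y0 L - y0 K) by ring,
      real_inner_smul_right, real_inner_comm, real_inner_add_sub_eq_norm_sq_sub_norm_sq]
    ring
  have green := sum_sum_mul_inner_sub_eq_neg_half hTsymm (fun K => (y1 K + y0 K) / 2) (y1 - y0)
  simp only [Pi.sub_apply, cell, face] at green
  simp only [mul_sub, div_mul_eq_mul_div, mul_div_assoc', sum_add_distrib, sum_sub_distrib,
    ← sum_div] at green ⊢
  linarith

/-- Conservation of the discrete `H¹`-level energy for one step of the
finite-volume scheme for the defocusing NLS with zero damping. -/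
theorem discrete_energy_conservation {ι : Type*} [Fintype ι]
    (m : ι → ℝ) (hm : ∀ K, 0 < m K)
    (T : ι → ι → ℝ) (hTsymm : ∀ K L, T K L = T L K)
    (hTnonneg : ∀ K L, 0 ≤ T K L) (hTdiag : ∀ K, T K K = 0)
    (b : ι → ℝ) (hb : ∀ K, 0 ≤ b K)
    (Δt : ℝ) (hΔt : 0 < Δt) (p : ℝ) (hp : 0 < p)
    (y0 y1 : ι → ℂ)
    (hscheme : ∀ K : ι,
      Complex.I * (m K : ℂ) * (y1 K - y0 K) / (Δt : ℂ)
        + ∑ L : ι, (T K L : ℂ) * ((y1 L + y0 L) / 2 - (y1 K + y0 K) / 2)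
        - (b K : ℂ) * (y1 K + y0 K) / 2
        - ((m K / (2 * p) : ℝ) : ℂ)
            * (((‖y1 K‖ ^ (2 * p) - ‖y0 K‖ ^ (2 * p)) /
                (‖y1 K‖ ^ 2 - ‖y0 K‖ ^ 2) : ℝ) : ℂ)
            * (y1 K + y0 K) = 0) :
    (1 / 4) * ∑ K : ι, ∑ L : ι, T K L * ‖y1 L - y1 K‖ ^ 2
      + (1 / 2) * ∑ K : ι, b K * ‖y1 K‖ ^ 2
      + ∑ K : ι, (m K / (2 * p)) * ‖y1 K‖ ^ (2 * p)
    = (1 / 4) * ∑ K : ι, ∑ L : ι, T K L * ‖y0 L - y0 K‖ ^ 2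
      + (1 / 2) * ∑ K : ι, b K * ‖y0 K‖ ^ 2
      + ∑ K : ι, (m K / (2 * p)) * ‖y0 K‖ ^ (2 * p) :=
  discrete_energy_conservation_general m T hTsymm b Δt p y0 y1 hscheme
end
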